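/- Work with the model (𝒦,r) = (𝒦_s,r_s) for s sufficiently large. Fix any ε > 0 and α > 2 (both allowed to depend on s). Let a, b', a', b ∈ ℝ² be four collinear points appearing on their common line in this order with |ab'| = |a'b| = s and |b'a'| = (α−2)s. Consider rectangles Γ with dimensions αs × s having ab as a side, Γ_a with dimensions s × εs having ab' as a side, and Γ_b with dimensions s × εs having a'b as a side, such that Γ, Γ_a, Γ_b have pairwise disjoint interiors. Then [Γ ∪ Γ_a ∪ Γ_b] contains all integer points of the smallest rectangle Γ̄ containing Γ ∪ Γ_a ∪ Γ_b. -/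

import Mathlib

open Set MeasureTheory Filter
open scoped RealInnerProductSpace Pointwise ENNReal

noncomputable section

/-- The Euclidean plane. -/
abbrev E : Type := EuclideanSpace ℝ (Fin 2)

/-- The point of the plane with coordinates `(a, b)`. -/
def pt (a b : ℝ) : E := (WithLp.equiv 2 (Fin 2 → ℝ)).symm ![a, b]

/-- The integer lattice `ℤ²` viewed inside the plane. -/
def latt : Set E := {x : E | ∃ a b : ℤ, x = pt a b}

/-- One step of threshold bootstrap percolation on `ℤ²` with neighbourhood `𝒦` and threshold `r`. -/
def step (𝒦 : Set E) (r : ℕ) (A : Set E) : Set E :=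
  A ∪ {x : E | x ∈ latt ∧ r ≤ (((fun k => x + k) '' 𝒦) ∩ A).ncard}

/-- The bootstrap percolation closure `[A]` (of the lattice points of `A`). -/
def bpCl (𝒦 : Set E) (r : ℕ) (A : Set E) : Set E :=
  ⋃ t : ℕ, (step 𝒦 r)^[t] (A ∩ latt)

/-- One step of the bootstrap percolation dynamics restricted to the region `B`. -/
def stepIn (𝒦 : Set E) (r : ℕ) (B A : Set E) : Set E :=
  A ∪ {x : E | x ∈ B ∩ latt ∧ r ≤ (((fun k => x + k) '' 𝒦) ∩ A).ncard}

/-- The closure `[A]_B` of `A` under the dynamics restricted to `B`. -/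
def bpClIn (𝒦 : Set E) (r : ℕ) (B A : Set E) : Set E :=
  ⋃ t : ℕ, (stepIn 𝒦 r B)^[t] (A ∩ latt)

/-- Rotation of the plane by `π/2` around the origin. -/
def rot (x : E) : E := pt (-(x 1)) (x 0)

/-- A "nice" set `K`: convex, invariant under rotation by `π/2` about the origin,
with `max {‖k‖ : k ∈ K} = 1`. -/
structure NiceK (K : Set E) : Prop where
  convex : Convex ℝ K
  rotInv : ∀ x ∈ K, rot x ∈ K
  normMax : IsGreatest ((fun k : E => ‖k‖) '' K) 1

/-- The neighbourhood `𝒦_s = (sK) ∩ ℤ²`. -/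
def Ks (K : Set E) (s : ℝ) : Set E := (s • K) ∩ latt

/-- The threshold `r_s = 1 + min_{u ≠ 0} |{x ∈ 𝒦_s : ⟨x,u⟩ < 0}|`. -/
def rKs (K : Set E) (s : ℝ) : ℕ :=
  1 + sInf ((fun u : E => {x : E | x ∈ Ks K s ∧ (inner ℝ x u : ℝ) < 0}.ncard) '' {u : E | u ≠ 0})

/-- The neighbourhood `𝒦_□` of the two-neighbour model. -/
def Ksq : Set E := {pt 0 0, pt 1 0, pt (-1) 0, pt 0 1, pt 0 (-1)}

/-- The neighbourhood `𝒦_△` of the three-neighbour model on the triangular lattice. -/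
def Ktri : Set E := Ksq ∪ {pt 1 (-1), pt (-1) 1}

/-- The set `𝒮` of stable directions of the model `(𝒦, r)`. -/
def stableDirs (𝒦 : Set E) (r : ℕ) : Set E :=
  {u : E | ‖u‖ = 1 ∧ {x : E | x ∈ 𝒦 ∧ (inner ℝ x u : ℝ) < 0}.ncard < r}

/-- The box `Λ_t = [-t,t]² ∩ ℤ²`. -/
def lam (t : ℝ) : Set E := {x ∈ latt | |x 0| ≤ t ∧ |x 1| ≤ t}

/-- A set `V` is `κ`-connected if any two of its points are joined by a finite
sequence of points of `V` with consecutive points at distance at most `κ`. -/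
def ConnectedWithin (κ : ℝ) (V : Set E) : Prop :=
  ∀ x ∈ V, ∀ y ∈ V, ∃ (k : ℕ) (f : ℕ → E), f 0 = x ∧ f k = y ∧
    (∀ i ≤ k, f i ∈ V) ∧ ∀ i < k, dist (f i) (f (i + 1)) ≤ κ

/-- `A` contains a `κ`-connected set of `14` sites. -/
def HasConn14 (κ : ℝ) (A : Set E) : Prop :=
  ∃ V ⊆ A, ConnectedWithin κ V ∧ V.ncard = 14

/-- Projection of a set of lattice points of the plane to the torus `(ℤ/nℤ)²`. -/
def torSet (n : ℕ) (S : Set E) : Set (ZMod n × ZMod n) :=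
  {p | ∃ a b : ℤ, pt a b ∈ S ∧ p = ((a : ZMod n), (b : ZMod n))}

/-- One step of bootstrap percolation on the torus `(ℤ/nℤ)²`. -/
def stepT (n : ℕ) (𝒦 : Set E) (r : ℕ) (A : Set (ZMod n × ZMod n)) : Set (ZMod n × ZMod n) :=
  A ∪ {x | r ≤ (((fun k => x + k) '' torSet n 𝒦) ∩ A).ncard}

/-- The bootstrap percolation closure on the torus `(ℤ/nℤ)²`. -/
def bpClT (n : ℕ) (𝒦 : Set E) (r : ℕ) (A : Set (ZMod n × ZMod n)) : Set (ZMod n × ZMod n) :=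
  ⋃ t : ℕ, (stepT n 𝒦 r)^[t] A

/-- The set `A(t)` of the first `t` sites of the torus in the order given by `σ`. -/
def Aset (n : ℕ) (σ : (ZMod n × ZMod n) ≃ Fin (n ^ 2)) (t : ℕ) : Set (ZMod n × ZMod n) :=
  {x | (σ x : ℕ) + 1 ≤ t}

/-- The percolation time `τ`. -/
def percTime (n : ℕ) (𝒦 : Set E) (r : ℕ) (σ : (ZMod n × ZMod n) ≃ Fin (n ^ 2)) : ℕ :=
  sInf {t : ℕ | bpClT n 𝒦 r (Aset n σ t) = univ}

/-- The probability (over a uniformly random bijection `σ : 𝕋 → {1,…,n²}`) that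
`|[A(τ-1)]| ≥ τ (1 + C / log n)`. -/
def probBad (𝒦 : Set E) (r : ℕ) (C : ℝ) (n : ℕ) : ℝ :=
  ({σ : (ZMod n × ZMod n) ≃ Fin (n ^ 2) |
      (percTime n 𝒦 r σ : ℝ) * (1 + C / Real.log n) ≤
        ((bpClT n 𝒦 r (Aset n σ (percTime n 𝒦 r σ - 1))).ncard : ℝ)}.ncard : ℝ) /
    (Nat.card ((ZMod n × ZMod n) ≃ Fin (n ^ 2)) : ℝ)

/-- The rectangle with corner `x`, side of length `len` in direction `rot u`
(perpendicular to `u`) and side of length `wid` in direction `u`. -/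
def rectDir (x u : E) (len wid : ℝ) : Set E :=
  {y : E | ∃ a b : ℝ, a ∈ Icc (0 : ℝ) len ∧ b ∈ Icc (0 : ℝ) wid ∧ y = x + a • rot u + b • u}

/-- The axis-parallel square `[a, a+c] × [b, b+c]`. -/
def axSquare (a b c : ℝ) : Set E := {x : E | x 0 ∈ Icc a (a + c) ∧ x 1 ∈ Icc b (b + c)}

/-- Droplets for the family `S` of stable directions: `D = ℤ² ∩ ⋂_{u ∈ S} {⟨·,u⟩ ≤ l_u}`. -/
def IsDropletS (S : Set E) (D : Set E) : Prop :=
  ∃ l : E → ℝ, D = latt ∩ ⋂ u ∈ S, {x : E | (inner ℝ x u : ℝ) ≤ l u}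

/-- The stable directions `𝒮_□` of the two-neighbour model. -/
def Ssq : Set E := {pt 1 0, pt (-1) 0, pt 0 1, pt 0 (-1)}

/-- The stable directions `𝒮_△` of the triangular three-neighbour model. -/
def Stri : Set E :=
  Ssq ∪ {pt ((Real.sqrt 2)⁻¹) ((Real.sqrt 2)⁻¹), pt (-(Real.sqrt 2)⁻¹) (-(Real.sqrt 2)⁻¹)}

/-- A valid choice of infection sets `𝒦_v ⊆ A_t ∩ (𝒦 + v)` of size `r`, one for each
newly infected vertex `v`. -/
def IsInfChoice (𝒦 : Set E) (r : ℕ) (A : Set E) (κ : E → Set E) : Prop :=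
  ∀ t : ℕ, ∀ v ∈ (step 𝒦 r)^[t + 1] (A ∩ latt) \ (step 𝒦 r)^[t] (A ∩ latt),
    κ v ⊆ (step 𝒦 r)^[t] (A ∩ latt) ∩ ((fun k => v + k) '' 𝒦) ∧ (κ v).ncard = r

/-- The out-degree of `u` in the infection graph determined by the choice `κ`. -/
def outDeg (𝒦 : Set E) (r : ℕ) (A : Set E) (κ : E → Set E) (u : E) : ℕ :=
  {v : E | (∃ t : ℕ, v ∈ (step 𝒦 r)^[t + 1] (A ∩ latt) \ (step 𝒦 r)^[t] (A ∩ latt)) ∧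
    u ∈ κ v}.ncard

/-- A vertex of `[A]` is good if its out-degree in the infection graph is at least `0.9 r`. -/
def IsGood (𝒦 : Set E) (r : ℕ) (A : Set E) (κ : E → Set E) (u : E) : Prop :=
  u ∈ bpCl 𝒦 r A ∧ (0.9 : ℝ) * r ≤ (outDeg 𝒦 r A κ u : ℝ)

/-- A fat convex set: bounded, convex, and all vertical and horizontal chords have
length at least `c`. -/
def IsFat (c : ℝ) (P : Set E) : Prop :=
  Convex ℝ P ∧ Bornology.IsBounded P ∧
  (∀ a : ℝ, (P ∩ {p : E | p 0 = a}).Nonempty → c ≤ Metric.diam (P ∩ {p : E | p 0 = a})) ∧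
  (∀ b : ℝ, (P ∩ {p : E | p 1 = b}).Nonempty → c ≤ Metric.diam (P ∩ {p : E | p 1 = b}))

def xmin (P : Set E) : ℝ := sInf ((fun p : E => p 0) '' P)
def xmax (P : Set E) : ℝ := sSup ((fun p : E => p 0) '' P)
def ymin (P : Set E) : ℝ := sInf ((fun p : E => p 1) '' P)
def ymax (P : Set E) : ℝ := sSup ((fun p : E => p 1) '' P)

/-- A convex set is horizontal if its horizontal extent is at least its vertical extent. -/
def IsHorizontal (P : Set E) : Prop := ymax P - ymin P ≤ xmax P - xmin P

/-- The upper boundary function of `P`. -/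
def upperF (P : Set E) (a : ℝ) : ℝ := sSup {y : ℝ | pt a y ∈ P}

/-- The lower boundary function of `P`. -/
def lowerF (P : Set E) (a : ℝ) : ℝ := sInf {y : ℝ | pt a y ∈ P}

/-- Slopes of tangent (supporting) lines to the upper boundary of `P` at abscissa `a`. -/
def upperSlopes (P : Set E) (a : ℝ) : Set ℝ :=
  {m : ℝ | ∀ t : ℝ, {y : ℝ | pt t y ∈ P}.Nonempty → upperF P t ≤ upperF P a + m * (t - a)}

/-- Slopes of tangent (supporting) lines to the lower boundary of `P` at abscissa `a`. -/
def lowerSlopes (P : Set E) (a : ℝ) : Set ℝ :=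
  {m : ℝ | ∀ t : ℝ, {y : ℝ | pt t y ∈ P}.Nonempty → lowerF P a + m * (t - a) ≤ lowerF P t}

/-- The vertical chord `P_{1,a}` is admissible: the tangent angles at the chord are in
`[-4π/9, 4π/9]` and the tangent slopes barely change at horizontal distance `C₄ s`. -/
def IsAdmissible (C₃ C₄ s : ℝ) (P : Set E) (a : ℝ) : Prop :=
  xmin P + C₄ * s < a ∧ a < xmax P - C₄ * s ∧ (∃ y : ℝ, pt a y ∈ P) ∧
  (∀ m ∈ upperSlopes P a, |Real.arctan m| ≤ 4 * Real.pi / 9) ∧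
  (∀ m ∈ lowerSlopes P a, |Real.arctan m| ≤ 4 * Real.pi / 9) ∧
  (∀ m₁ ∈ upperSlopes P (a - C₄ * s), ∀ m₂ ∈ upperSlopes P (a + C₄ * s),
    Real.arctan m₁ - Real.arctan m₂ ≤ 1 / C₃) ∧
  (∀ m₁ ∈ lowerSlopes P (a - C₄ * s), ∀ m₂ ∈ lowerSlopes P (a + C₄ * s),
    Real.arctan m₂ - Real.arctan m₁ ≤ 1 / C₃)

/-- The set `𝒬` of quasi-stable directions. -/
def quasiStable (s : ℝ) : Set E :=
  {u : E | ‖u‖ = 1 ∧ ∃ a b : ℤ, |(a : ℝ)| ≤ s ∧ |(b : ℝ)| ≤ s ∧ pt a b ≠ 0 ∧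
    ∃ c : ℝ, pt a b = c • u}

/-- The (possibly improper) half-plane `{⟨·,u⟩ ≤ l}` for `l ∈ ℝ ∪ {±∞}`. -/
def ehs (u : E) (l : EReal) : Set E := {x : E | (((inner ℝ x u : ℝ) : ℝ) : EReal) ≤ l}

/-- The droplet with radii `l : E → EReal` (indexed by the quasi-stable directions). -/
def dropletOf (s : ℝ) (l : E → EReal) : Set E := ⋂ u ∈ quasiStable s, ehs u (l u)

/-- `D` is a droplet for the quasi-stable directions. -/
def IsDropletQ (s : ℝ) (D : Set E) : Prop := ∃ l : E → EReal, D = dropletOf s l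

/-- The tight radius of `D` in direction `u`. -/
def tight (D : Set E) (u : E) : EReal := sSup ((fun x : E => (((inner ℝ x u : ℝ) : ℝ) : EReal)) '' D)

/-- The `u`-side of a droplet `D`. -/
def uside (u : E) (D : Set E) : Set E := {x ∈ D | ∀ y ∈ D, (inner ℝ y u : ℝ) ≤ (inner ℝ x u : ℝ)}

/-- A non-degenerate droplet: each `u`-side has length at least `C^{1/3}` for unstable
`u ∈ 𝒬` and at least `C^{1/2}` for stable `u ∈ 𝒬`. -/
def IsNondeg (s C : ℝ) (𝒦 : Set E) (r : ℕ) (D : Set E) : Prop :=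
  IsDropletQ s D ∧ ∀ u ∈ quasiStable s,
    (u ∉ stableDirs 𝒦 r → C ^ ((1 : ℝ) / 3) ≤ Metric.diam (uside u D)) ∧
    (u ∈ stableDirs 𝒦 r → C ^ ((1 : ℝ) / 2) ≤ Metric.diam (uside u D))

/-- The droplet obtained from `D` by replacing its tight radius in direction `v` by `m`. -/
def extDroplet (s : ℝ) (v : E) (D : Set E) (m : EReal) : Set E :=
  (⋂ u ∈ quasiStable s \ {v}, ehs u (tight D u)) ∩ ehs v m

/-- `D'` is the `v`-extension of the droplet `D`. -/
def IsExtension (s : ℝ) (v : E) (D D' : Set E) : Prop :=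
  ∃ l' : EReal, tight D v < l' ∧ D' = extDroplet s v D l' ∧
    ((D' \ D) ∩ latt).Nonempty ∧
    ∀ m : EReal, tight D v < m → ((extDroplet s v D m \ D) ∩ latt).Nonempty → l' ≤ m

/-- Rotation of the plane by the angle `θ`. -/
def rotA (θ : ℝ) (u : E) : E :=
  pt (Real.cos θ * u 0 - Real.sin θ * u 1) (Real.sin θ * u 0 + Real.cos θ * u 1)

/-- The closed half-plane `H̄_u(l)`. -/
def hs (u : E) (l : ℝ) : Set E := {x : E | (inner ℝ x u : ℝ) ≤ l}

/-- The open half-plane `ℍ_u(l)`. -/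
def hso (u : E) (l : ℝ) : Set E := {x : E | (inner ℝ x u : ℝ) < l}

/-- Translate of a set. -/
def transl (x : E) (S : Set E) : Set E := (fun y => x + y) '' S

/-- The rectangle `x + (H̄_u ∩ H̄_{u+π/2} ∩ H̄_{u+π}(wid) ∩ H̄_{u-π/2}(len))`. -/
def rectHS (x u : E) (wid len : ℝ) : Set E :=
  transl x (hs u 0 ∩ hs (rotA (Real.pi / 2) u) 0 ∩ hs (rotA Real.pi u) wid ∩
    hs (rotA (-(Real.pi / 2)) u) len)

end

/-!
Order the sites of `Γ̄` lexicographically, first by the coordinate along `f` (the height above the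
long side of `Γ`), then along `e`. A site of `Γ̄` outside `Γ ∪ Γ_a ∪ Γ_b` lies strictly above `Γ`
and more than `s` away from both short sides of `Γ̄`, so its translates by the points of `𝒦_s` in
the lexicographically negative half-plane stay in `Γ̄` and are smaller. Since `𝒦_s` is centrally
symmetric, that half-plane holds `(|𝒦_s| - 1)/2` points, at least `r_s` because the horizontal line
through the origin meets `𝒦_s` in at least three points. So the smallest site of `Γ̄` not in
`[Γ ∪ Γ_a ∪ Γ_b]` would have `r_s` infected neighbours, which is absurd.
-/

section InnerProductSpace

variable {V : Type*} [NormedAddCommGroup V] [InnerProductSpace ℝ V]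

lemma eq_inner_smul_add_inner_smul (hV : Module.finrank ℝ V = 2) {e f : V} (he : ‖e‖ = 1)
    (hf : ‖f‖ = 1) (hef : ⟪e, f⟫ = 0) (x : V) : x = ⟪x, e⟫ • e + ⟪x, f⟫ • f := by
  have hon : Orthonormal ℝ ![e, f] := by
    rw [orthonormal_iff_ite]
    intro i j
    fin_cases i <;> fin_cases j <;> simp [he, hf, hef, real_inner_comm e f]
  let b := OrthonormalBasis.mk hon
    (hon.linearIndependent.span_eq_top_of_card_eq_finrank (by simp [hV])).ge
  simpa [b, Fin.sum_univ_two, real_inner_comm x] using (b.sum_repr' x).symm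

def lexKey (e f : V) : V →+ ℝ ×ₗ ℝ :=
  AddMonoidHom.mk' (fun x => toLex (⟪x, f⟫, ⟪x, e⟫)) fun x y => by
    simp only [inner_add_left, ← toLex_add, Prod.mk_add_mk]

lemma lexKey_neg_iff {e f x : V} :
    lexKey e f x < 0 ↔ ⟪x, f⟫ < 0 ∨ ⟪x, f⟫ = 0 ∧ ⟪x, e⟫ < 0 :=
  Prod.Lex.lt_iff

lemma lexKey_eq_zero_iff (hV : Module.finrank ℝ V = 2) {e f : V} (he : ‖e‖ = 1) (hf : ‖f‖ = 1)
    (hef : ⟪e, f⟫ = 0) {x : V} : lexKey e f x = 0 ↔ x = 0 := by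
  refine ⟨fun h => ?_, fun h => h ▸ map_zero _⟩
  have hxf : ⟪x, f⟫ = 0 := congrArg (fun p => (ofLex p).1) h
  have hxe : ⟪x, e⟫ = 0 := congrArg (fun p => (ofLex p).2) h
  rw [eq_inner_smul_add_inner_smul hV he hf hef x, hxe, hxf, zero_smul, zero_smul, add_zero]

end InnerProductSpace

lemma ncard_eq_two_mul_ncard_neg_add_ncard_ker {G β : Type*} [AddCommGroup G] [AddCommGroup β]
    [LinearOrder β] [IsOrderedAddMonoid β] (g : G →+ β) {N : Set G} (hN : N.Finite)
    (hneg : ∀ x ∈ N, -x ∈ N) :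
    N.ncard = 2 * {x ∈ N | g x < 0}.ncard + {x ∈ N | g x = 0}.ncard := by
  have hpos : {x ∈ N | 0 < g x} = Neg.neg '' {x ∈ N | g x < 0} := by
    ext x
    refine ⟨fun ⟨hx, hgx⟩ => ⟨-x, ⟨hneg x hx, by simpa⟩, neg_neg x⟩, ?_⟩
    rintro ⟨y, ⟨hy, hgy⟩, rfl⟩
    exact ⟨hneg y hy, by simpa⟩
  have hsplit : N = ({x ∈ N | g x < 0} ∪ {x ∈ N | 0 < g x}) ∪ {x ∈ N | g x = 0} := by
    ext x
    simp only [mem_union, mem_sep_iff]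
    rcases lt_trichotomy (g x) 0 with h | h | h <;> tauto
  have hfin (p : G → Prop) : {x ∈ N | p x}.Finite := hN.subset (sep_subset _ _)
  have hdisj₁ : Disjoint {x ∈ N | g x < 0} {x ∈ N | 0 < g x} :=
    disjoint_left.2 fun x h₁ h₂ => lt_asymm h₁.2 h₂.2
  have hdisj₂ : Disjoint ({x ∈ N | g x < 0} ∪ {x ∈ N | 0 < g x}) {x ∈ N | g x = 0} :=
    disjoint_left.2 fun x h₁ h₂ => by rcases h₁ with h₁ | h₁ <;> simp [h₂.2] at h₁
  conv_lhs => rw [hsplit, ncard_union_eq hdisj₂ ((hfin _).union (hfin _)) (hfin _),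
    ncard_union_eq hdisj₁ (hfin _) (hfin _), hpos, ncard_image_of_injective _ neg_injective]
  ring

@[simp] lemma pt_apply_zero (a b : ℝ) : pt a b 0 = a := by simp [pt]

@[simp] lemma pt_apply_one (a b : ℝ) : pt a b 1 = b := by simp [pt]

lemma pt_add_pt (a b c d : ℝ) : pt a b + pt c d = pt (a + c) (b + d) := by
  ext i; fin_cases i <;> simp

lemma add_mem_latt {x y : E} (hx : x ∈ latt) (hy : y ∈ latt) : x + y ∈ latt := by
  obtain ⟨a, b, rfl⟩ := hx
  obtain ⟨c, d, rfl⟩ := hy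
  exact ⟨a + c, b + d, by push_cast; exact pt_add_pt _ _ _ _⟩

lemma neg_mem_latt {x : E} (hx : x ∈ latt) : -x ∈ latt := by
  obtain ⟨a, b, rfl⟩ := hx
  refine ⟨-a, -b, ?_⟩
  ext i; fin_cases i <;> simp

lemma Bornology.IsBounded.finite_inter_latt {S : Set E} (hS : Bornology.IsBounded S) :
    (S ∩ latt).Finite := by
  obtain ⟨R, hR⟩ := hS.subset_closedBall 0
  have hbound (x : ℤ) (hx : |(x : ℝ)| ≤ R) : x ∈ Icc (-⌈R⌉) ⌈R⌉ := by
    obtain ⟨h₁, h₂⟩ := abs_le.1 hx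
    exact ⟨by exact_mod_cast (neg_le_neg (Int.le_ceil R)).trans h₁,
      by exact_mod_cast h₂.trans (Int.le_ceil R)⟩
  refine (((finite_Icc (-⌈R⌉) ⌈R⌉).prod (finite_Icc (-⌈R⌉) ⌈R⌉)).image
    fun p : ℤ × ℤ => pt p.1 p.2).subset ?_
  rintro _ ⟨hx, a, b, rfl⟩
  have hnorm : ‖pt a b‖ ≤ R := mem_closedBall_zero_iff.1 (hR hx)
  refine ⟨(a, b), ⟨hbound a ?_, hbound b ?_⟩, rfl⟩
  · simpa using (PiLp.norm_apply_le (pt a b) 0).trans hnorm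
  · simpa using (PiLp.norm_apply_le (pt a b) 1).trans hnorm

lemma rot_rot (x : E) : rot (rot x) = -x := by
  ext i; fin_cases i <;> simp [rot]

namespace NiceK

variable {K : Set E}

lemma neg_mem (hK : NiceK K) {x : E} (hx : x ∈ K) : -x ∈ K :=
  rot_rot x ▸ hK.rotInv _ (hK.rotInv x hx)

lemma smul_mem (hK : NiceK K) {x : E} (hx : x ∈ K) {t : ℝ} (ht : |t| ≤ 1) : t • x ∈ K := by
  obtain ⟨ht₁, ht₂⟩ := abs_le.1 ht
  convert hK.convex hx (hK.neg_mem hx) (a := (1 + t) / 2) (b := (1 - t) / 2)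
    (by linarith) (by linarith) (by ring) using 1
  module

lemma zero_mem (hK : NiceK K) : (0 : E) ∈ K := by
  obtain ⟨k, hk, -⟩ := hK.normMax.1
  simpa using hK.smul_mem hk (t := 0) (by simp)

lemma norm_le_one (hK : NiceK K) {x : E} (hx : x ∈ K) : ‖x‖ ≤ 1 :=
  hK.normMax.2 ⟨x, hx, rfl⟩

lemma isBounded (hK : NiceK K) : Bornology.IsBounded K :=
  (Metric.isBounded_closedBall (x := (0 : E)) (r := 1)).subset fun _ hx =>
    mem_closedBall_zero_iff.2 (hK.norm_le_one hx)

/-- `(c, 0)` is the midpoint of `(2 c k₀) • k` and `(-2 c k₁) • rot k` for a unit vector `k ∈ K`. -/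
lemma pt_mem (hK : NiceK K) {c : ℝ} (hc : |c| ≤ 1 / 2) : pt c 0 ∈ K := by
  obtain ⟨k, hk, hk1 : ‖k‖ = 1⟩ := hK.normMax.1
  have hsq : k 0 ^ 2 + k 1 ^ 2 = 1 := by
    simpa [Fin.sum_univ_two, hk1] using (EuclideanSpace.real_norm_sq_eq k).symm
  have hcoord (i : Fin 2) : |2 * c * k i| ≤ 1 := by
    have := hk1 ▸ PiLp.norm_apply_le k i
    rw [Real.norm_eq_abs] at this
    rw [abs_mul, abs_mul, abs_two]
    nlinarith [abs_nonneg c, abs_nonneg (k i)]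
  convert hK.convex (hK.smul_mem hk (hcoord 0)) (hK.smul_mem (hK.rotInv k hk)
    (abs_neg (2 * c * k 1) ▸ hcoord 1)) (a := 1 / 2) (b := 1 / 2) (by norm_num) (by norm_num)
    (by norm_num) using 1
  ext i; fin_cases i <;> simp only [Fin.zero_eta, Fin.mk_one, rot, PiLp.add_apply, PiLp.smul_apply,
    smul_eq_mul, pt_apply_zero, pt_apply_one]
  · linear_combination -c * hsq
  · ring

end NiceK

section Neighbourhood

variable {K : Set E}

lemma finite_Ks (hK : NiceK K) (s : ℝ) : (Ks K s).Finite :=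
  (hK.isBounded.smul₀ s).finite_inter_latt

lemma norm_le_of_mem_Ks (hK : NiceK K) {s : ℝ} (hs : 0 ≤ s) {x : E} (hx : x ∈ Ks K s) :
    ‖x‖ ≤ s := by
  obtain ⟨y, hy, rfl⟩ := mem_smul_set.1 hx.1
  rw [norm_smul, Real.norm_of_nonneg hs]
  exact mul_le_of_le_one_right hs (hK.norm_le_one hy)

lemma neg_mem_Ks (hK : NiceK K) {s : ℝ} {x : E} (hx : x ∈ Ks K s) : -x ∈ Ks K s := by
  obtain ⟨⟨y, hy, rfl⟩, hxl⟩ := hx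
  exact ⟨⟨-y, hK.neg_mem hy, smul_neg s y⟩, neg_mem_latt hxl⟩

lemma zero_mem_Ks (hK : NiceK K) (s : ℝ) : (0 : E) ∈ Ks K s :=
  ⟨⟨0, hK.zero_mem, smul_zero s⟩, 0, 0, by ext i; fin_cases i <;> simp⟩

lemma pt_one_mem_Ks (hK : NiceK K) {s : ℝ} (hs : 2 ≤ s) : pt 1 0 ∈ Ks K s := by
  refine ⟨⟨pt s⁻¹ 0, hK.pt_mem ?_, ?_⟩, 1, 0, by simp⟩
  · rw [abs_inv, abs_of_pos (by linarith)]
    exact inv_le_of_inv_le₀ (by norm_num) (by linarith)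
  · ext i; fin_cases i <;> simp [(by linarith : s ≠ 0)]

/-- `𝒦_s` is symmetric, so a half-plane `{⟪·, u⟫ < 0}` holds `(|𝒦_s| - |𝒦_s ∩ u^⊥|) / 2` of its
points. The lexicographic half-plane misses only the origin, while for `u = (0, 1)` the line `u^⊥`
carries at least the three points `0, ±(1, 0)`. -/
lemma rKs_le_ncard_lexKey_neg (hK : NiceK K) {s : ℝ} (hs : 2 ≤ s) {e f : E} (he : ‖e‖ = 1)
    (hf : ‖f‖ = 1) (hef : ⟪e, f⟫ = 0) : rKs K s ≤ {k ∈ Ks K s | lexKey e f k < 0}.ncard := by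
  have hfin := finite_Ks hK s
  have hneg : ∀ x ∈ Ks K s, -x ∈ Ks K s := fun _ hx => neg_mem_Ks hK hx
  let u : E := pt 0 1
  let g : E →+ ℝ := AddMonoidHom.mk' (fun x => ⟪x, u⟫) fun x y => inner_add_left x y u
  have hlex := ncard_eq_two_mul_ncard_neg_add_ncard_ker (lexKey e f) hfin hneg
  have hker : {k ∈ Ks K s | lexKey e f k = 0} = {0} := by
    ext k
    simp only [mem_sep_iff, mem_singleton_iff,
      lexKey_eq_zero_iff finrank_euclideanSpace_fin he hf hef, and_iff_right_iff_imp]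
    rintro rfl
    exact zero_mem_Ks hK s
  have hu := ncard_eq_two_mul_ncard_neg_add_ncard_ker g hfin hneg
  have hline : 3 ≤ {k ∈ Ks K s | g k = 0}.ncard := by
    have h₁ : pt 1 0 ≠ 0 := fun h => by simpa using congrArg (fun x : E => x 0) h
    have h₂ : pt 1 0 ≠ -pt 1 0 := fun h => by
      have := congrArg (fun x : E => x 0) h
      norm_num at this
    have h₃ : ({0, pt 1 0, -pt 1 0} : Set E).ncard = 3 :=
      ncard_eq_three.2 ⟨_, _, _, h₁.symm, (neg_ne_zero.2 h₁).symm, h₂, rfl⟩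
    refine h₃ ▸ ncard_le_ncard ?_ (hfin.subset (sep_subset _ _))
    have hpt : pt 1 0 ∈ Ks K s := pt_one_mem_Ks hK hs
    have hgpt : g (pt 1 0) = 0 := by simp [g, u, PiLp.inner_apply]
    rintro k (rfl | rfl | rfl)
    · exact ⟨zero_mem_Ks hK s, map_zero g⟩
    · exact ⟨hpt, hgpt⟩
    · exact ⟨neg_mem_Ks hK hpt, by rw [map_neg, hgpt, neg_zero]⟩
  have hu0 : u ≠ 0 := fun h => by simpa [u] using congrArg (fun x : E => x 1) h
  have hmin : rKs K s ≤ 1 + {k ∈ Ks K s | g k < 0}.ncard := by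
    unfold rKs
    refine Nat.add_le_add_left (Nat.sInf_le ?_) 1
    exact ⟨u, hu0, rfl⟩
  rw [hker, ncard_singleton] at hlex
  omega

end Neighbourhood

section Closure

variable {𝒦 A : Set E} {r : ℕ}

lemma subset_bpCl : A ∩ latt ⊆ bpCl 𝒦 r A :=
  subset_iUnion (fun t => (step 𝒦 r)^[t] (A ∩ latt)) 0

lemma step_bpCl_subset (h𝒦 : 𝒦.Finite) : step 𝒦 r (bpCl 𝒦 r A) ⊆ bpCl 𝒦 r A := by
  rintro x (hx | ⟨hxl, hx⟩)
  · exact hx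
  have hnbhd : ((fun k => x + k) '' 𝒦 ∩ bpCl 𝒦 r A).Finite := (h𝒦.image _).inter_of_left _
  have hmono : Monotone fun t => (step 𝒦 r)^[t] (A ∩ latt) := fun t t' h =>
    Function.monotone_iterate_of_id_le (f := step 𝒦 r) (fun _ => subset_union_left) h _
  obtain ⟨t, ht⟩ := hmono.directed_le.exists_mem_subset_of_finset_subset_biUnion
    (s := hnbhd.toFinset) (by rw [Finite.coe_toFinset]; exact inter_subset_right)
  refine mem_iUnion.2 ⟨t + 1, ?_⟩
  rw [Function.iterate_succ_apply']
  refine Or.inr ⟨hxl, hx.trans (ncard_le_ncard ?_ ((h𝒦.image _).inter_of_left _))⟩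
  rw [Finite.coe_toFinset] at ht
  exact subset_inter inter_subset_left ht

/-- The minimal counterexample, for the order pulled back along `g`, would see all its translates
in `{g < 0}` already infected. -/
theorem subset_bpCl_of_translates_mem {β : Type*} [AddCommGroup β] [LinearOrder β]
    [IsOrderedAddMonoid β] (g : E →+ β) {T : Set E} (h𝒦 : 𝒦.Finite) (hT : T.Finite)
    (hTl : T ⊆ latt) (hr : r ≤ {k ∈ 𝒦 | g k < 0}.ncard)
    (htrans : ∀ z ∈ T \ A, ∀ k ∈ 𝒦, g k < 0 → z + k ∈ T) : T ⊆ bpCl 𝒦 r A := by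
  by_contra hTB
  obtain ⟨z, ⟨hzT, hzB⟩, hzmin⟩ := exists_min_image _ g hT.sdiff (sdiff_nonempty.2 hTB)
  have hzA : z ∉ A := fun hzA => hzB (subset_bpCl ⟨hzA, hTl hzT⟩)
  have hbelow : (fun k => z + k) '' {k ∈ 𝒦 | g k < 0} ⊆ (fun k => z + k) '' 𝒦 ∩ bpCl 𝒦 r A := by
    rintro _ ⟨k, ⟨hk, hgk⟩, rfl⟩
    refine ⟨⟨k, hk, rfl⟩, by_contra fun h => ?_⟩
    have := hzmin (z + k) ⟨htrans z ⟨hzT, hzA⟩ k hk hgk, h⟩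
    rw [map_add] at this
    exact (add_lt_of_neg_right _ hgk).not_ge this
  refine hzB (step_bpCl_subset h𝒦 (Or.inr ⟨hTl hzT, ?_⟩))
  calc r ≤ {k ∈ 𝒦 | g k < 0}.ncard := hr
    _ = ((fun k => z + k) '' {k ∈ 𝒦 | g k < 0}).ncard :=
      (ncard_image_of_injective _ (add_right_injective z)).symm
    _ ≤ _ := ncard_le_ncard hbelow ((h𝒦.image _).inter_of_left _)

end Closure

section Rectangle

def frameRect (a e f : E) (I J : Set ℝ) : Set E :=
  {x | ∃ c₁ ∈ I, ∃ c₂ ∈ J, x = a + c₁ • e + c₂ • f}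

lemma isBounded_frameRect_Icc (a e f : E) (p q p' q' : ℝ) :
    Bornology.IsBounded (frameRect a e f (Icc p q) (Icc p' q')) := by
  refine (((isCompact_Icc (a := p) (b := q)).prod (isCompact_Icc (a := p') (b := q'))).image
    (f := fun c : ℝ × ℝ => a + c.1 • e + c.2 • f) (by fun_prop)).isBounded.subset ?_
  rintro _ ⟨c₁, hc₁, c₂, hc₂, rfl⟩
  exact ⟨(c₁, c₂), ⟨hc₁, hc₂⟩, rfl⟩

lemma add_mem_frameRect {e f : E} (he : ‖e‖ = 1) (hf : ‖f‖ = 1) (hef : ⟪e, f⟫ = 0) {a k : E}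
    {I J : Set ℝ} {c₁ c₂ : ℝ} (h₁ : c₁ + ⟪k, e⟫ ∈ I) (h₂ : c₂ + ⟪k, f⟫ ∈ J) :
    a + c₁ • e + c₂ • f + k ∈ frameRect a e f I J := by
  refine ⟨_, h₁, _, h₂, ?_⟩
  conv_lhs => rw [eq_inner_smul_add_inner_smul finrank_euclideanSpace_fin he hf hef k]
  module

lemma add_mem_of_lexKey_neg {s ε α : ℝ} {a e f z k : E} (he : ‖e‖ = 1) (hf : ‖f‖ = 1)
    (hef : ⟪e, f⟫ = 0)
    (hz : z ∈ frameRect a e f (Icc 0 (α * s)) (Icc (-s) (ε * s)) \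
      (frameRect a e f (Icc 0 (α * s)) (Icc (-s) 0) ∪ frameRect a e f (Icc 0 s) (Icc 0 (ε * s)) ∪
        frameRect a e f (Icc ((α - 1) * s) (α * s)) (Icc 0 (ε * s))))
    (hk : ‖k‖ ≤ s) (hgk : lexKey e f k < 0) :
    z + k ∈ frameRect a e f (Icc 0 (α * s)) (Icc (-s) (ε * s)) := by
  obtain ⟨⟨c₁, ⟨hc₁, hc₁'⟩, c₂, ⟨hc₂, hc₂'⟩, rfl⟩, hzA⟩ := hz
  simp only [mem_union, not_or] at hzA
  obtain ⟨⟨hA, hAa⟩, hAb⟩ := hzA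
  have hc₂pos : 0 < c₂ := lt_of_not_ge fun h => hA ⟨c₁, ⟨hc₁, hc₁'⟩, c₂, ⟨hc₂, h⟩, rfl⟩
  have hc₁s : s < c₁ := lt_of_not_ge fun h => hAa ⟨c₁, ⟨hc₁, h⟩, c₂, ⟨hc₂pos.le, hc₂'⟩, rfl⟩
  have hc₁s' : c₁ < (α - 1) * s :=
    lt_of_not_ge fun h => hAb ⟨c₁, ⟨h, hc₁'⟩, c₂, ⟨hc₂pos.le, hc₂'⟩, rfl⟩
  have hke : |⟪k, e⟫| ≤ s := (abs_real_inner_le_norm k e).trans (by rwa [he, mul_one])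
  have hkf : |⟪k, f⟫| ≤ s := (abs_real_inner_le_norm k f).trans (by rwa [hf, mul_one])
  rw [abs_le] at hke hkf
  have hkf' : ⟪k, f⟫ ≤ 0 := by
    rcases lexKey_neg_iff.1 hgk with h | ⟨h, -⟩ <;> linarith
  exact add_mem_frameRect he hf hef ⟨by linarith, by linarith⟩ ⟨by linarith, by linarith⟩

end Rectangle

theorem statement_12 (K : Set E) (hK : NiceK K) :
    ∃ s₀ : ℝ, ∀ s : ℝ, s₀ ≤ s → ∀ ε : ℝ, 0 < ε → ∀ α : ℝ, 2 < α →
      ∀ a e f : E, ‖e‖ = 1 → ‖f‖ = 1 → (inner ℝ e f : ℝ) = 0 →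
        {x : E | ∃ c₁ ∈ Icc (0 : ℝ) (α * s), ∃ c₂ ∈ Icc (-s) (ε * s),
            x = a + c₁ • e + c₂ • f} ∩ latt ⊆
          bpCl (Ks K s) (rKs K s)
            ({x : E | ∃ c₁ ∈ Icc (0 : ℝ) (α * s), ∃ c₂ ∈ Icc (-s) (0 : ℝ),
                x = a + c₁ • e + c₂ • f} ∪
             {x : E | ∃ c₁ ∈ Icc (0 : ℝ) s, ∃ c₂ ∈ Icc (0 : ℝ) (ε * s),
                x = a + c₁ • e + c₂ • f} ∪
             {x : E | ∃ c₁ ∈ Icc ((α - 1) * s) (α * s), ∃ c₂ ∈ Icc (0 : ℝ) (ε * s),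
                x = a + c₁ • e + c₂ • f}) := by
  refine ⟨2, fun s hs ε _ α _ a e f he hf hef => ?_⟩
  refine subset_bpCl_of_translates_mem (lexKey e f) (finite_Ks hK s)
    (isBounded_frameRect_Icc a e f _ _ _ _).finite_inter_latt inter_subset_right
    (rKs_le_ncard_lexKey_neg hK hs he hf hef) ?_
  rintro z ⟨⟨hz, hzl⟩, hzA⟩ k hk hgk
  exact ⟨add_mem_of_lexKey_neg he hf hef ⟨hz, hzA⟩ (norm_le_of_mem_Ks hK (by linarith) hk) hgk,
    add_mem_latt hzl hk.2⟩
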